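/- arXiv:1904.11911 — 4 statements merged into one kernel-verified Lean document; each statement's English description precedes it below -/
import Mathlib

section
/- Let Φ > 0, b > 0 and H(y) = (y-b)² + (2/Φ) e^{-Φy}(y - b + 1/Φ). Then there exists C > 0 such that H(y) ≥ C·y for all y ≥ 0. -/
/-! H is continuous and strictly positive on `[0, ∞)`, and for `y ≥ 2b` already its quadratic
part `(y - b)²` dominates `(b / 2) y`; a positive minimum on the compact interval `[0, 2b]`
covers the remaining range. -/

open Real Set

theorem exists_pos_mul_le_of_pos_on_Icc {f : ℝ → ℝ} {R c : ℝ} (hR : 0 < R) (hc : 0 < c)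
    (hf : ContinuousOn f (Icc 0 R)) (hpos : ∀ y ∈ Icc 0 R, 0 < f y)
    (hlarge : ∀ y ≥ R, c * y ≤ f y) :
    ∃ C > (0 : ℝ), ∀ y ≥ (0 : ℝ), C * y ≤ f y := by
  obtain ⟨y₀, hy₀, hmin⟩ :=
    isCompact_Icc.exists_isMinOn (nonempty_Icc.2 hR.le) hf
  have hm : 0 < f y₀ := hpos y₀ hy₀
  refine ⟨min c (f y₀ / R), lt_min hc (by positivity), fun y hy => ?_⟩
  rcases le_or_gt y R with hyR | hyR
  · calc min c (f y₀ / R) * y ≤ f y₀ / R * y := by gcongr; exact min_le_right _ _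
      _ ≤ f y₀ / R * R := by gcongr
      _ = f y₀ := div_mul_cancel₀ _ hR.ne'
      _ ≤ f y := hmin ⟨hy, hyR⟩
  · calc min c (f y₀ / R) * y ≤ c * y := by gcongr; exact min_le_left _ _
      _ ≤ f y := hlarge y hyR.le

section

variable {Φ : ℝ} (b : ℝ) {y : ℝ}

theorem sq_add_exp_mul_pos (hΦ : 0 < Φ) (hy : 0 ≤ y) :
    0 < (y - b) ^ 2 + (2 / Φ) * exp (-Φ * y) * (y - b + 1 / Φ) := by
  have hu : 0 < 1 / Φ := by positivity
  rw [div_eq_mul_one_div 2 Φ]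
  rcases le_or_gt 0 (y - b + 1 / Φ) with ht | ht
  · have hexp_term : 0 ≤ 2 * (1 / Φ) * exp (-Φ * y) * (y - b + 1 / Φ) := by positivity
    rcases eq_or_ne y b with rfl | hyb
    · simp only [sub_self, zero_add]
      positivity
    · have : 0 < (y - b) ^ 2 := sq_pos_of_ne_zero (sub_ne_zero.2 hyb)
      linarith
  · -- `e^{-Φy} ≤ 1` turns the bound into `(y - b + 1/Φ)² + 1/Φ² > 0`
    have hexp_le : exp (-Φ * y) ≤ 1 := exp_le_one_iff.2 (by nlinarith)
    nlinarith [mul_nonneg hu.le (sub_nonneg.2 hexp_le), sq_nonneg (y - b + 1 / Φ)]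

theorem mul_le_sq_add_exp_mul (hΦ : 0 < Φ) (hb : 0 ≤ b) (hy : 2 * b ≤ y) :
    b / 2 * y ≤ (y - b) ^ 2 + (2 / Φ) * exp (-Φ * y) * (y - b + 1 / Φ) := by
  have hexp_term : 0 ≤ (2 / Φ) * exp (-Φ * y) * (y - b + 1 / Φ) := by
    have : 0 < 1 / Φ := by positivity
    have : 0 < y - b + 1 / Φ := by linarith
    positivity
  have hquad : b / 2 * y ≤ (y - b) ^ 2 := by nlinarith [mul_nonneg (sub_nonneg.2 hy) hb]
  linarith

end

theorem H_linear_lower_bound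
    (Φ b : ℝ) (hΦ : 0 < Φ) (hb : 0 < b)
    (H : ℝ → ℝ)
    (hH : ∀ y, H y = (y - b) ^ 2 + (2 / Φ) * Real.exp (-Φ * y) * (y - b + 1 / Φ)) :
    ∃ C > (0:ℝ), ∀ y ≥ (0:ℝ), C * y ≤ H y := by
  obtain rfl : H = fun y => (y - b) ^ 2 + (2 / Φ) * exp (-Φ * y) * (y - b + 1 / Φ) :=
    funext hH
  exact exists_pos_mul_le_of_pos_on_Icc (R := 2 * b) (by positivity) (half_pos hb)
    (by fun_prop) (fun y hy => sq_add_exp_mul_pos b hΦ hy.1)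
    (fun y hy => mul_le_sq_add_exp_mul b hΦ hb.le hy)
end

section
/- For all Φ > 0 and all x < 0, one has x + x·e^{Φx} - (2/Φ)(e^{Φx} - 1) < 0. -/
/-!
With `t = Φ x < 0` the claim is `Φ⁻¹ g(t) < 0` for `g t = t + t eᵗ - 2 (eᵗ - 1)`. Since `g 0 = 0`,
it suffices that `g` is strictly increasing on `(-∞, 0]`; its derivative `1 - eᵗ + t eᵗ` is
positive for `t ≠ 0`, which is `1 - t < e⁻ᵗ` multiplied by `eᵗ`.
-/

open Real

lemma one_sub_exp_add_mul_exp_pos {s : ℝ} (hs : s ≠ 0) : 0 < 1 - exp s + s * exp s := by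
  have h : (1 - s) * exp s < exp (-s) * exp s :=
    mul_lt_mul_of_pos_right (by linarith [add_one_lt_exp (neg_ne_zero.mpr hs)]) (exp_pos s)
  rw [← exp_add, neg_add_cancel, exp_zero] at h
  linarith

lemma hasDerivAt_add_mul_exp_sub_two_mul_exp_sub_one (s : ℝ) :
    HasDerivAt (fun t => t + t * exp t - 2 * (exp t - 1)) (1 - exp s + s * exp s) s := by
  refine (((hasDerivAt_id' s).add ((hasDerivAt_id' s).mul (hasDerivAt_exp s))).sub
    (((hasDerivAt_exp s).sub_const 1).const_mul 2)).congr_deriv ?_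
  ring

lemma strictMonoOn_add_mul_exp_sub_two_mul_exp_sub_one :
    StrictMonoOn (fun t => t + t * exp t - 2 * (exp t - 1)) (Set.Iic 0) := by
  refine strictMonoOn_of_hasDerivWithinAt_pos (convex_Iic 0) (by fun_prop)
    (fun s _ => (hasDerivAt_add_mul_exp_sub_two_mul_exp_sub_one s).hasDerivWithinAt) ?_
  intro s hs
  rw [interior_Iic] at hs
  exact one_sub_exp_add_mul_exp_pos hs.ne

lemma add_mul_exp_sub_two_mul_exp_sub_one_neg {t : ℝ} (ht : t < 0) :
    t + t * exp t - 2 * (exp t - 1) < 0 := by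
  simpa using strictMonoOn_add_mul_exp_sub_two_mul_exp_sub_one ht.le (Set.mem_Iic.mpr le_rfl) ht

theorem integrand_negative
    (Φ : ℝ) (hΦ : 0 < Φ) (x : ℝ) (hx : x < 0) :
    x + x * Real.exp (Φ * x) - (2 / Φ) * (Real.exp (Φ * x) - 1) < 0 := by
  have hscaled : Φ * (x + x * exp (Φ * x) - (2 / Φ) * (exp (Φ * x) - 1))
      = Φ * x + Φ * x * exp (Φ * x) - 2 * (exp (Φ * x) - 1) := by
    field_simp
  refine neg_of_mul_neg_right ?_ hΦ.le
  rw [hscaled]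
  exact add_mul_exp_sub_two_mul_exp_sub_one_neg (mul_neg_of_pos_of_neg hΦ hx)
end

section
/- Let Φ > 0, b > 0, c₀ ∈ ℝ, c₁ < 0, c₂ > 0 and let W : [0,∞) → ℝ be continuous, strictly increasing, with W > 0 on (0,∞) and satisfying W(a-x)/W(a) ≤ e^{-Φx} for all 0 ≤ x ≤ a. Define g(a) = 2c₁∫₀^a W(x)dx - 2c₂∫₀^a e^{-Φx}W(x)dx + W(a)(c₀ - 2a c₁ + 2b c₁ - (2c₂/Φ)e^{-Φa}). Then g(a)/W(a) → ∞ as a → ∞, and hence g(a) → ∞ as a → ∞. -/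
open Real Set Filter intervalIntegral

/-! Domination gives `W x ≤ exp (Φ (x - a)) W a` on `[0, a]`, so both integrals in `g a` are at
most `W a / Φ` (for the weighted one, `exp (-Φ x) W x ≤ exp (-Φ a) W a` and `a exp (-Φ a) ≤ 1 / Φ`).
Hence `g a / W a` is bounded below by a linear function with slope `-2 c₁ > 0`, and `g a` follows
because `W a ≥ W 1 > 0` for `a ≥ 1`. -/

lemma integral_exp_mul_sub_le {Φ : ℝ} (hΦ : 0 < Φ) (a : ℝ) :
    ∫ x in (0:ℝ)..a, exp (Φ * (x - a)) ≤ 1 / Φ := by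
  have hderiv : ∀ x ∈ uIcc (0:ℝ) a,
      HasDerivAt (fun x => exp (Φ * (x - a)) / Φ) (exp (Φ * (x - a))) x := by
    intro x _
    have h := ((((hasDerivAt_id' x).sub_const a).const_mul Φ).exp).div_const Φ
    rwa [mul_one, mul_div_cancel_right₀ _ hΦ.ne'] at h
  rw [integral_eq_sub_of_hasDerivAt hderiv (by apply Continuous.intervalIntegrable; fun_prop),
    sub_self, mul_zero, exp_zero]
  have : 0 < exp (Φ * (0 - a)) / Φ := by positivity
  linarith

lemma mul_exp_neg_mul_le {Φ : ℝ} (hΦ : 0 < Φ) (a : ℝ) : a * exp (-Φ * a) ≤ 1 / Φ := by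
  rw [le_div_iff₀ hΦ]
  calc a * exp (-Φ * a) * Φ = (Φ * a) * exp (-Φ * a) := by ring
    _ ≤ exp (Φ * a) * exp (-Φ * a) := by
      gcongr
      linarith [add_one_le_exp (Φ * a)]
    _ = 1 := by rw [← exp_add]; simp

section Domination

variable {Φ : ℝ} {W : ℝ → ℝ}

lemma le_exp_mul_of_dom (hdom : ∀ a x : ℝ, 0 ≤ x → x ≤ a → W (a - x) ≤ exp (-Φ * x) * W a)
    {a x : ℝ} (hx : x ∈ Icc 0 a) : W x ≤ exp (Φ * (x - a)) * W a := by
  have h := hdom a (a - x) (by linarith [hx.2]) (by linarith [hx.1])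
  rwa [sub_sub_cancel, show -Φ * (a - x) = Φ * (x - a) by ring] at h

lemma integral_le_div_of_dom (hΦ : 0 < Φ) (hW : ContinuousOn W (Ici 0))
    (hdom : ∀ a x : ℝ, 0 ≤ x → x ≤ a → W (a - x) ≤ exp (-Φ * x) * W a)
    {a : ℝ} (ha : 0 ≤ a) (hWa : 0 ≤ W a) :
    ∫ x in (0:ℝ)..a, W x ≤ W a / Φ :=
  calc ∫ x in (0:ℝ)..a, W x ≤ ∫ x in (0:ℝ)..a, exp (Φ * (x - a)) * W a :=
        integral_mono_on ha ((hW.mono (uIcc_of_le ha ▸ fun x hx => hx.1)).intervalIntegrable)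
          (by apply Continuous.intervalIntegrable; fun_prop) fun x hx => le_exp_mul_of_dom hdom hx
    _ = (∫ x in (0:ℝ)..a, exp (Φ * (x - a))) * W a := integral_mul_const _ _
    _ ≤ 1 / Φ * W a := by gcongr; exact integral_exp_mul_sub_le hΦ a
    _ = W a / Φ := one_div_mul_eq_div _ _

lemma integral_exp_neg_mul_le_div_of_dom (hΦ : 0 < Φ) (hW : ContinuousOn W (Ici 0))
    (hdom : ∀ a x : ℝ, 0 ≤ x → x ≤ a → W (a - x) ≤ exp (-Φ * x) * W a)
    {a : ℝ} (ha : 0 ≤ a) (hWa : 0 ≤ W a) :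
    ∫ x in (0:ℝ)..a, exp (-Φ * x) * W x ≤ W a / Φ := by
  have hpt : ∀ x ∈ Icc 0 a, exp (-Φ * x) * W x ≤ exp (-Φ * a) * W a := fun x hx =>
    calc exp (-Φ * x) * W x ≤ exp (-Φ * x) * (exp (Φ * (x - a)) * W a) := by
          gcongr; exact le_exp_mul_of_dom hdom hx
      _ = exp (-Φ * a) * W a := by rw [← mul_assoc, ← exp_add]; ring_nf
  calc ∫ x in (0:ℝ)..a, exp (-Φ * x) * W x ≤ ∫ _ in (0:ℝ)..a, exp (-Φ * a) * W a :=
        integral_mono_on ha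
          ((by fun_prop : Continuous fun x => exp (-Φ * x)).continuousOn.mul
            (hW.mono (uIcc_of_le ha ▸ fun x hx => hx.1))).intervalIntegrable
          intervalIntegrable_const hpt
    _ = a * exp (-Φ * a) * W a := by rw [integral_const, sub_zero, smul_eq_mul, mul_assoc]
    _ ≤ 1 / Φ * W a := by gcongr; exact mul_exp_neg_mul_le hΦ a
    _ = W a / Φ := one_div_mul_eq_div _ _

end Domination

lemma Filter.Tendsto.atTop_of_div_of_eventually_ge {α : Type*} {l : Filter α} {f w : α → ℝ}
    {c : ℝ} (h : Tendsto (fun x => f x / w x) l atTop) (hc : 0 < c) (hw : ∀ᶠ x in l, c ≤ w x) :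
    Tendsto f l atTop := by
  refine tendsto_atTop_mono' l ?_ (h.atTop_mul_const hc)
  filter_upwards [hw, h.eventually_ge_atTop 0] with x hcw hfw
  calc f x / w x * c ≤ f x / w x * w x := by gcongr
    _ = f x := div_mul_cancel₀ _ (hc.trans_le hcw).ne'

theorem g_tendsto_atTop_general
    (Φ b c₀ c₁ c₂ : ℝ) (hΦ : 0 < Φ) (hc₁ : c₁ < 0) (hc₂ : 0 < c₂)
    (W : ℝ → ℝ)
    (hWcont : ContinuousOn W (Ici 0))
    (hWmono : StrictMonoOn W (Ici 0))
    (hWpos : ∀ x > (0:ℝ), 0 < W x)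
    (hWdom : ∀ a x : ℝ, 0 ≤ x → x ≤ a → W (a - x) ≤ Real.exp (-Φ * x) * W a)
    (g : ℝ → ℝ)
    (hg : ∀ a, g a =
      2 * c₁ * (∫ x in (0:ℝ)..a, W x) - 2 * c₂ * (∫ x in (0:ℝ)..a, Real.exp (-Φ * x) * W x)
        + W a * (c₀ - 2 * a * c₁ + 2 * b * c₁ - (2 * c₂ / Φ) * Real.exp (-Φ * a))) :
    Tendsto (fun a => g a / W a) atTop atTop ∧ Tendsto g atTop atTop := by
  set K := c₀ + 2 * b * c₁ + 2 * c₁ / Φ - 4 * c₂ / Φ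
  have hlower : ∀ a > 0, K - 2 * c₁ * a ≤ g a / W a := by
    intro a ha
    have hWa := hWpos a ha
    have hI := integral_le_div_of_dom hΦ hWcont hWdom ha.le hWa.le
    have hJ := integral_exp_neg_mul_le_div_of_dom hΦ hWcont hWdom ha.le hWa.le
    have hexp : exp (-Φ * a) ≤ 1 := exp_le_one_iff.2 (by nlinarith)
    have hK : (K - 2 * c₁ * a) * W a = 2 * c₁ * (W a / Φ) - 2 * c₂ * (W a / Φ)
        + W a * (c₀ - 2 * a * c₁ + 2 * b * c₁ - 2 * c₂ / Φ) := by ring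
    rw [le_div_iff₀ hWa, hg, hK]
    linarith [mul_le_mul_of_nonpos_left hI (by linarith : 2 * c₁ ≤ 0),
      mul_le_mul_of_nonneg_left hJ (by linarith : 0 ≤ 2 * c₂),
      mul_le_mul_of_nonneg_left hexp (by positivity : 0 ≤ 2 * c₂ / Φ * W a)]
  have hratio : Tendsto (fun a => g a / W a) atTop atTop := by
    refine tendsto_atTop_mono' atTop ?_ (tendsto_atTop_add_const_left atTop K
      (tendsto_id.const_mul_atTop (by linarith : 0 < -2 * c₁)))
    filter_upwards [eventually_gt_atTop 0] with a ha
    dsimp only [id]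
    linarith [hlower a ha]
  refine ⟨hratio, hratio.atTop_of_div_of_eventually_ge (hWpos 1 one_pos) ?_⟩
  filter_upwards [eventually_ge_atTop 1] with a ha
  exact hWmono.monotoneOn (mem_Ici.2 zero_le_one) (mem_Ici.2 (zero_le_one.trans ha)) ha

theorem g_tendsto_atTop
    (Φ b c₀ c₁ c₂ : ℝ) (hΦ : 0 < Φ) (hb : 0 < b) (hc₁ : c₁ < 0) (hc₂ : 0 < c₂)
    (W : ℝ → ℝ)
    (hWcont : ContinuousOn W (Ici 0))
    (hWmono : StrictMonoOn W (Ici 0))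
    (hWpos : ∀ x > (0:ℝ), 0 < W x)
    (hWdom : ∀ a x : ℝ, 0 ≤ x → x ≤ a → W (a - x) ≤ Real.exp (-Φ * x) * W a)
    (g : ℝ → ℝ)
    (hg : ∀ a, g a =
      2 * c₁ * (∫ x in (0:ℝ)..a, W x) - 2 * c₂ * (∫ x in (0:ℝ)..a, Real.exp (-Φ * x) * W x)
        + W a * (c₀ - 2 * a * c₁ + 2 * b * c₁ - (2 * c₂ / Φ) * Real.exp (-Φ * a))) :
    Tendsto (fun a => g a / W a) atTop atTop ∧ Tendsto g atTop atTop :=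
  g_tendsto_atTop_general Φ b c₀ c₁ c₂ hΦ hc₁ hc₂ W hWcont hWmono hWpos hWdom g hg
end

section
/- Let Φ > 0, b > 0, c₀ ∈ ℝ, c₁ < 0, c₂ > 0 with c₀ + 2c₁b - (2/Φ)c₂ < 0 (the case b > (c₂/Φ - c₀/2)/c₁). Let W : [0,∞) → ℝ be continuously differentiable on (0,∞), strictly increasing, positive on (0,∞), with W(a-x) ≤ e^{-Φx}W(a) for 0 ≤ x ≤ a. Set g₁(a) = 2c₁∫₀^aW - 2c₂∫₀^a e^{-Φx}W(x)dx, g₂(a) = c₀ + 2c₁(b-a) - (2c₂/Φ)e^{-Φa}, and g = g₁ + W·g₂. Assume g is continuous on [0,∞), differentiable on (0,∞) with g' = W'·g₂, g(a) → ∞ as a → ∞, and either (i) W(0) = 0 (so g(0) = 0) with g₂(0) < 0, or (ii) W(0) > 0 with g(0) = W(0)g₂(0) < 0. Then g has a unique root a* in (0,∞), g < 0 on (0,a*), g > 0 on (a*,∞), and g'(a*) > 0. -/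
open Real Set Filter

/-! Since `g' = W' g₂` with `W' > 0` and `g₂` strictly increasing from `g₂ 0 < 0` to `+∞`, the
derivative changes sign exactly once, at the root `t₀` of `g₂`. Hence `g` decreases on `[0, t₀]`
and increases on `[t₀, ∞)`; as `g 0 ≤ 0` and `g → ∞`, it crosses zero exactly once, after `t₀`,
where `g' > 0`. -/

section AffineSubExp

variable {Φ c₁ c₂ : ℝ} (c₀ b : ℝ)

lemma strictMono_affine_sub_exp (hΦ : 0 < Φ) (hc₁ : c₁ < 0) (hc₂ : 0 ≤ c₂) :
    StrictMono fun a : ℝ => c₀ + 2 * c₁ * (b - a) - (2 * c₂ / Φ) * exp (-Φ * a) := by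
  intro x y hxy
  have hexp : exp (-Φ * y) ≤ exp (-Φ * x) := exp_le_exp.mpr (by nlinarith)
  have hcoef : 0 ≤ 2 * c₂ / Φ := by positivity
  simp only
  nlinarith [mul_le_mul_of_nonneg_left hexp hcoef]

lemma tendsto_affine_sub_exp_atTop (hΦ : 0 < Φ) (hc₁ : c₁ < 0) (hc₂ : 0 ≤ c₂) :
    Tendsto (fun a : ℝ => c₀ + 2 * c₁ * (b - a) - (2 * c₂ / Φ) * exp (-Φ * a)) atTop atTop := by
  have haffine : Tendsto (fun a : ℝ => c₀ + 2 * c₁ * b - 2 * c₂ / Φ + -(2 * c₁) * a) atTop atTop :=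
    tendsto_atTop_add_const_left _ _ (tendsto_id.const_mul_atTop (by linarith))
  refine tendsto_atTop_mono' atTop ?_ haffine
  filter_upwards [eventually_ge_atTop 0] with a ha
  have hexp : exp (-Φ * a) ≤ 1 := exp_le_one_iff.mpr (by nlinarith)
  have hcoef : 0 ≤ 2 * c₂ / Φ := by positivity
  nlinarith [mul_le_mul_of_nonneg_left hexp hcoef]

end AffineSubExp

lemma strictAntiOn_Icc_and_strictMonoOn_Ici_of_hasDerivAt {g g' : ℝ → ℝ} {s t : ℝ} (hst : s ≤ t)
    (hcont : ContinuousOn g (Ici s)) (hderiv : ∀ x > s, HasDerivAt g (g' x) x)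
    (hneg : ∀ x ∈ Ioo s t, g' x < 0) (hpos : ∀ x > t, 0 < g' x) :
    StrictAntiOn g (Icc s t) ∧ StrictMonoOn g (Ici t) := by
  constructor
  · refine strictAntiOn_of_hasDerivWithinAt_neg (convex_Icc s t) (hcont.mono Icc_subset_Ici_self)
      (fun x hx => ?_) fun x hx => hneg x (by rwa [interior_Icc] at hx)
    rw [interior_Icc] at hx ⊢
    exact (hderiv x hx.1).hasDerivWithinAt
  · refine strictMonoOn_of_hasDerivWithinAt_pos (convex_Ici t) (hcont.mono (Ici_subset_Ici.mpr hst))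
      (fun x hx => ?_) fun x hx => hpos x (by rwa [interior_Ici] at hx)
    rw [interior_Ici] at hx ⊢
    exact (hderiv x (hst.trans_lt hx)).hasDerivWithinAt

lemma exists_unique_root_of_strictAntiOn_of_strictMonoOn {g : ℝ → ℝ} {s t : ℝ} (hst : s < t)
    (hgs : g s ≤ 0) (hanti : StrictAntiOn g (Icc s t)) (hmono : StrictMonoOn g (Ici t))
    (hcont : ContinuousOn g (Ici t)) (htop : Tendsto g atTop atTop) :
    ∃ r > t, g r = 0 ∧ (∀ a > s, g a = 0 → a = r) ∧ (∀ a ∈ Ioo s r, g a < 0) ∧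
      ∀ a > r, 0 < g a := by
  have hgt : g t < 0 := (hanti (left_mem_Icc.mpr hst.le) (right_mem_Icc.mpr hst.le) hst).trans_le hgs
  obtain ⟨r, hr, hgr⟩ := intermediate_value_Ioi hcont htop hgt
  have hneg : ∀ a ∈ Ioo s r, g a < 0 := by
    rintro a ⟨hsa, har⟩
    rcases le_or_gt a t with hat | hta
    · exact (hanti (left_mem_Icc.mpr hst.le) ⟨hsa.le, hat⟩ hsa).trans_le hgs
    · exact hgr ▸ hmono (mem_Ici.mpr hta.le) (mem_Ici.mpr hr.le) har
  have hpos : ∀ a > r, 0 < g a := fun a hra =>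
    hgr ▸ hmono (mem_Ici.mpr hr.le) (mem_Ici.mpr (hr.trans hra).le) hra
  refine ⟨r, hr, hgr, fun a hsa hga => ?_, hneg, hpos⟩
  rcases lt_trichotomy a r with har | rfl | hra
  · exact absurd hga (hneg a ⟨hsa, har⟩).ne
  · rfl
  · exact absurd hga (hpos a hra).ne'

theorem g_unique_root_general
    (Φ b c₀ c₁ c₂ : ℝ) (hΦ : 0 < Φ) (hc₁ : c₁ < 0) (hc₂ : 0 < c₂)
    (hcase : c₀ + 2 * c₁ * b - (2 / Φ) * c₂ < 0)
    (W W' : ℝ → ℝ)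
    (hW'pos : ∀ x > (0:ℝ), 0 < W' x)
    (g₂ g : ℝ → ℝ)
    (hg₂ : ∀ a, g₂ a = c₀ + 2 * c₁ * (b - a) - (2 * c₂ / Φ) * Real.exp (-Φ * a))
    (hgcont : ContinuousOn g (Ici 0))
    (hgderiv : ∀ a > (0:ℝ), HasDerivAt g (W' a * g₂ a) a)
    (hgtop : Tendsto g atTop atTop)
    (hcases : (W 0 = 0 ∧ g 0 = 0 ∧ g₂ 0 < 0) ∨ (0 < W 0 ∧ g 0 = W 0 * g₂ 0 ∧ g 0 < 0)) :
    ∃ astar > (0:ℝ), g astar = 0 ∧ (∀ a > (0:ℝ), g a = 0 → a = astar) ∧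
      (∀ a ∈ Ioo 0 astar, g a < 0) ∧ (∀ a > astar, 0 < g a) ∧
      0 < W' astar * g₂ astar := by
  obtain rfl : g₂ = _ := funext hg₂
  have hg₂mono := strictMono_affine_sub_exp c₀ b hΦ hc₁ hc₂.le
  have hg₂0 : c₀ + 2 * c₁ * (b - 0) - (2 * c₂ / Φ) * exp (-Φ * 0) < 0 := by
    simpa [mul_div_right_comm] using hcase
  obtain ⟨t₀, ht₀, hg₂t₀⟩ := intermediate_value_Ioi (by fun_prop)
    (tendsto_affine_sub_exp_atTop c₀ b hΦ hc₁ hc₂.le) hg₂0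
  have hderiv_pos : ∀ x > t₀, 0 < W' x * _ := fun x hx =>
    mul_pos (hW'pos x (ht₀.trans hx)) (hg₂t₀ ▸ hg₂mono hx)
  obtain ⟨hanti, hmono⟩ := strictAntiOn_Icc_and_strictMonoOn_Ici_of_hasDerivAt ht₀.le hgcont
    hgderiv (fun x hx => mul_neg_of_pos_of_neg (hW'pos x hx.1) (hg₂t₀ ▸ hg₂mono hx.2))
    hderiv_pos
  obtain ⟨r, hr, hgr, huniq, hneg, hpos⟩ := exists_unique_root_of_strictAntiOn_of_strictMonoOn ht₀
    (hcases.elim (fun h => h.2.1.le) (fun h => h.2.2.le)) hanti hmono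
    (hgcont.mono (Ici_subset_Ici.mpr ht₀.le)) hgtop
  exact ⟨r, ht₀.trans hr, hgr, huniq, hneg, hpos, hderiv_pos r hr⟩

theorem g_unique_root
    (Φ b c₀ c₁ c₂ : ℝ) (hΦ : 0 < Φ) (hb : 0 < b) (hc₁ : c₁ < 0) (hc₂ : 0 < c₂)
    (hcase : c₀ + 2 * c₁ * b - (2 / Φ) * c₂ < 0)
    (W W' : ℝ → ℝ)
    (hWcont : ContinuousOn W (Ici 0))
    (hW' : ∀ x > (0:ℝ), HasDerivAt W (W' x) x)
    (hW'cont : ContinuousOn W' (Ioi 0))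
    (hW'pos : ∀ x > (0:ℝ), 0 < W' x)
    (hWmono : StrictMonoOn W (Ici 0))
    (hWpos : ∀ x > (0:ℝ), 0 < W x)
    (hWdom : ∀ a x : ℝ, 0 ≤ x → x ≤ a → W (a - x) ≤ Real.exp (-Φ * x) * W a)
    (g₁ g₂ g : ℝ → ℝ)
    (hg₁ : ∀ a, g₁ a =
      2 * c₁ * (∫ x in (0:ℝ)..a, W x) - 2 * c₂ * ∫ x in (0:ℝ)..a, Real.exp (-Φ * x) * W x)
    (hg₂ : ∀ a, g₂ a = c₀ + 2 * c₁ * (b - a) - (2 * c₂ / Φ) * Real.exp (-Φ * a))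
    (hg : ∀ a, g a = g₁ a + W a * g₂ a)
    (hgcont : ContinuousOn g (Ici 0))
    (hgderiv : ∀ a > (0:ℝ), HasDerivAt g (W' a * g₂ a) a)
    (hgtop : Tendsto g atTop atTop)
    (hcases : (W 0 = 0 ∧ g 0 = 0 ∧ g₂ 0 < 0) ∨ (0 < W 0 ∧ g 0 = W 0 * g₂ 0 ∧ g 0 < 0)) :
    ∃ astar > (0:ℝ), g astar = 0 ∧ (∀ a > (0:ℝ), g a = 0 → a = astar) ∧
      (∀ a ∈ Ioo 0 astar, g a < 0) ∧ (∀ a > astar, 0 < g a) ∧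
      0 < W' astar * g₂ astar :=
  g_unique_root_general Φ b c₀ c₁ c₂ hΦ hc₁ hc₂ hcase W W' hW'pos g₂ g hg₂ hgcont hgderiv hgtop
    hcases
end
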